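/- Let r ≥ 1 and let n_1, ..., n_r be integers with 1 < n_1 | n_2 | ... | n_r, let G = C_{n_1} ⊕ ... ⊕ C_{n_r}, and let d', d be positive integers with d' | d and d | n_r. Then for every i, (d/d')·(n_i/gcd(d, n_i)) = B_i·(n_i/A_i) is a positive integer, and for all integers a_1, ..., a_r, the element of G whose i-th coordinate is the residue class of (d/d')·(n_i/gcd(d, n_i))·a_i modulo n_i equals 0 if and only if υ_i(d',d) divides a_i for every i ∈ {1, ..., r}. -/

import Mathlib

open scoped BigOperators

attribute [local instance] Classical.propDecidable

/-- A sequence (multiset) over `G` is zero-sumfree if no nonempty sub-multiset sums to `0`. -/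
def IsZeroSumFree {G : Type*} [AddCommGroup G] (S : Multiset G) : Prop :=
  ∀ T : Multiset G, T ≤ S → T ≠ 0 → T.sum ≠ 0

/-- A minimal zero-sum sequence: sum `0`, and no nonempty proper sub-multiset sums to `0`. -/
def IsMinimalZeroSum {G : Type*} [AddCommGroup G] (S : Multiset G) : Prop :=
  S.sum = 0 ∧ ∀ T : Multiset G, T < S → T ≠ 0 → T.sum ≠ 0

/-- The cross number of a sequence: `k(S) = Σ_{g ∈ S} 1/ord(g)`. -/
noncomputable def crossNumber {G : Type*} [AddCommGroup G] (S : Multiset G) : ℝ :=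
  (S.map fun g => (1 : ℝ) / (addOrderOf g)).sum

/-- The little cross number `k(G)`: max of `k(S)` over zero-sumfree sequences `S` over `G`. -/
noncomputable def littleCrossNumber (G : Type*) [AddCommGroup G] : ℝ :=
  sSup {x : ℝ | ∃ S : Multiset G, IsZeroSumFree S ∧ crossNumber S = x}

/-- The cross number `K(G)`: max of `k(S)` over minimal zero-sum sequences `S` over `G`. -/
noncomputable def bigCrossNumber (G : Type*) [AddCommGroup G] : ℝ :=
  sSup {x : ℝ | ∃ S : Multiset G, IsMinimalZeroSum S ∧ crossNumber S = x}

/-- The Davenport constant `D(G)`. -/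
noncomputable def davenport (G : Type*) [AddCommGroup G] : ℕ :=
  sInf {t | 1 ≤ t ∧ ∀ S : Multiset G, t ≤ Multiset.card S →
    ∃ T, T ≤ S ∧ T ≠ 0 ∧ T.sum = 0}

/-- The constant `η(G)`. -/
noncomputable def etaConst (G : Type*) [AddCommGroup G] : ℕ :=
  sInf {t | 1 ≤ t ∧ ∀ S : Multiset G, t ≤ Multiset.card S →
    ∃ T, T ≤ S ∧ T ≠ 0 ∧ Multiset.card T ≤ AddMonoid.exponent G ∧ T.sum = 0}

/-- `υ_i(d',d) = A_i / gcd(A_i, B_i)` where `A_i = gcd(d', n_i)` and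
`B_i = lcm(d, n_i)/lcm(d', n_i)`. -/
def upsilon (ni d' d : ℕ) : ℕ :=
  Nat.gcd d' ni / Nat.gcd (Nat.gcd d' ni) (Nat.lcm d ni / Nat.lcm d' ni)

/-- `k*` of `C_{n_1} ⊕ ... ⊕ C_{n_r}`, computed from the primary decomposition. -/
noncomputable def kStarTuple {r : ℕ} (n : Fin r → ℕ) : ℝ :=
  ∑ i, ∑ p ∈ (n i).primeFactors,
    ((p ^ ((n i).factorization p) : ℝ) - 1) / (p ^ ((n i).factorization p))

/-- `α(n) = Σ_{d | n} (P⁻(d) − 1)/d`. -/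
noncomputable def alphaFn (n : ℕ) : ℝ :=
  ∑ d ∈ n.divisors, ((d.minFac : ℝ) - 1) / d

/-- `β(n) = Σ_{p | n prime} (p − 1)/p`. -/
noncomputable def betaFn (n : ℕ) : ℝ :=
  ∑ p ∈ n.primeFactors, ((p : ℝ) - 1) / p

/-!
Write `A = gcd(d', n)`, `B = lcm(d, n) / lcm(d', n)` and `m = (d / d') · (n / gcd(d, n))`.
Multiplying by `d'` shows that `m` and `B · (n / A)` both equal `lcm(d, n) / d'`. The
coordinate `m · a` vanishes in `ℤ/nℤ` iff the additive order `n / gcd(n, m)` of `m` divides `a`,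
and for `m = B · (n / A)` with `A ∣ n` that order is `A / gcd(A, B) = υ`.
-/

namespace Nat

theorem mul_div_gcd_eq_lcm (d n : ℕ) : d * (n / gcd d n) = lcm d n :=
  (Nat.mul_div_assoc d (gcd_dvd_right d n)).symm

theorem div_mul_div_gcd_eq_lcm_div_lcm_mul_div_gcd {d' d : ℕ} (hd' : 0 < d') (h : d' ∣ d)
    (n : ℕ) : d / d' * (n / gcd d n) = lcm d n / lcm d' n * (n / gcd d' n) := by
  apply Nat.eq_of_mul_eq_mul_right hd'
  calc d / d' * (n / gcd d n) * d' = d * (n / gcd d n) := by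
        rw [mul_right_comm, Nat.div_mul_cancel h]
    _ = lcm d n := mul_div_gcd_eq_lcm d n
    _ = lcm d n / lcm d' n * lcm d' n :=
        (Nat.div_mul_cancel (lcm_dvd_lcm_of_dvd_left n h)).symm
    _ = lcm d n / lcm d' n * (n / gcd d' n) * d' := by
        rw [mul_assoc, mul_comm (n / _), mul_div_gcd_eq_lcm]

theorem div_mul_div_gcd_pos {d' d n : ℕ} (hd : 0 < d) (h : d' ∣ d) (hn : 0 < n) :
    0 < d / d' * (n / gcd d n) :=
  Nat.mul_pos (Nat.div_pos (le_of_dvd hd h) (pos_of_dvd_of_pos h hd))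
    (Nat.div_pos (gcd_le_right d hn) (gcd_pos_of_pos_right d hn))

theorem div_gcd_mul_div_eq_div_gcd {n A : ℕ} (hn : 0 < n) (hA : A ∣ n) (B : ℕ) :
    n / gcd n (B * (n / A)) = A / gcd A B := by
  obtain ⟨k, rfl⟩ := hA
  obtain ⟨hA, hk⟩ := CanonicallyOrderedAdd.mul_pos.mp hn
  rw [Nat.mul_div_cancel_left k hA, mul_comm A k, mul_comm B k, gcd_mul_left,
    Nat.mul_div_mul_left _ _ hk]

end Nat

theorem ZMod.natCast_mul_intCast_eq_zero_iff {n : ℕ} [NeZero n] (m : ℕ) (a : ℤ) :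
    (m : ZMod n) * a = 0 ↔ ((n / n.gcd m : ℕ) : ℤ) ∣ a := by
  rw [← ZMod.addOrderOf_coe m (NeZero.ne n), addOrderOf_dvd_iff_zsmul_eq_zero, zsmul_eq_mul,
    mul_comm]

theorem upsilon_eq_div_gcd {n : ℕ} (hn : 0 < n) (d' d : ℕ) :
    upsilon n d' d = n / n.gcd (d.lcm n / d'.lcm n * (n / d'.gcd n)) :=
  (Nat.div_gcd_mul_div_eq_div_gcd hn (Nat.gcd_dvd_right d' n) _).symm

theorem stmt3 (r : ℕ) (hr : 0 < r) (n : Fin r → ℕ)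
    (hn : ∀ i, 1 < n i)
    (d' d : ℕ) (hd' : 0 < d') (hd'd : d' ∣ d) (hdN : d ∣ n ⟨r - 1, by omega⟩) :
    (∀ i : Fin r,
      d / d' * (n i / Nat.gcd d (n i)) =
        (Nat.lcm d (n i) / Nat.lcm d' (n i)) * (n i / Nat.gcd d' (n i)) ∧
      0 < d / d' * (n i / Nat.gcd d (n i))) ∧
    (∀ a : Fin r → ℤ,
      ((fun i : Fin r =>
          ((d / d' * (n i / Nat.gcd d (n i)) : ℕ) : ZMod (n i)) * ((a i : ZMod (n i)))) =
        (0 : ∀ i : Fin r, ZMod (n i))) ↔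
      ∀ i : Fin r, (upsilon (n i) d' d : ℤ) ∣ a i) := by
  have hn_pos (i : Fin r) : 0 < n i := zero_lt_one.trans (hn i)
  have hd : 0 < d := Nat.pos_of_dvd_of_pos hdN (hn_pos _)
  refine ⟨fun i => ⟨Nat.div_mul_div_gcd_eq_lcm_div_lcm_mul_div_gcd hd' hd'd (n i),
    Nat.div_mul_div_gcd_pos hd hd'd (hn_pos i)⟩, fun a => ?_⟩
  refine funext_iff.trans (forall_congr' fun i => ?_)
  have : NeZero (n i) := ⟨(hn_pos i).ne'⟩
  rw [Pi.zero_apply, ZMod.natCast_mul_intCast_eq_zero_iff,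
    Nat.div_mul_div_gcd_eq_lcm_div_lcm_mul_div_gcd hd' hd'd, upsilon_eq_div_gcd (hn_pos i)]
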